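/- arXiv:2103.11038 — 3 statements merged into one kernel-verified Lean document; each statement's English description precedes it below -/
import Mathlib

section
/- Let X have a strictly decreasing pdf f on (a,∞) with f(x)=0 elsewhere. Then f(X) is uniformly distributed on (0,1) if and only if f(x) = e^{a-x} for x ∈ (a,∞). -/
/-!
Write `T x = ∫ t in Ioi x, f t`. For `x > a`, strict antitonicity gives
`{f ≤ f x} = Iic a ∪ Ici x`, a set of mass `T x`; so uniformity of `f(X)` says exactly that
`T x = f x` wherever `f x < 1`. Since `T` stays below the total mass `1` on `(a, ∞)`, the set
`{x > a | f x < 1}` is relatively clopen in `(a, ∞)`, hence everything. Then `T' = -f = -T` on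
`(a, ∞)`, so `T x = T a * exp (a - x) = exp (a - x)`. Conversely, for `f = exp (a - ·)` each
`y ∈ (0, 1)` is the value `f (a - log y)`, and `T = f`.
-/

open Set MeasureTheory Real

namespace MeasureTheory.IntegrableOn

variable {f : ℝ → ℝ} {a : ℝ}

theorem exists_mem_Ioi_lt (hf : IntegrableOn f (Ioi a)) {c : ℝ} (hc : 0 < c) :
    ∃ x ∈ Ioi a, f x < c := by
  by_contra! hge
  have hconst : IntegrableOn (fun _ => c) (Ioi a) :=
    hf.mono' aestronglyMeasurable_const <| ae_restrict_of_forall_mem measurableSet_Ioi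
      fun x hx => by rw [Real.norm_of_nonneg hc.le]; exact hge x hx
  simp [hc.ne', Real.volume_Ioi] at hconst

theorem hasDerivAt_integral_Ioi (hf : IntegrableOn f (Ioi a)) {x : ℝ} (hx : a < x)
    (hfx : ContinuousAt f x) : HasDerivAt (fun u => ∫ t in Ioi u, f t) (-f x) x := by
  have hprim : HasDerivAt (fun u => (∫ t in Ioi a, f t) - ∫ t in a..u, f t) (-f x) x :=
    (intervalIntegral.integral_hasDerivAt_right
      ((intervalIntegrable_iff_integrableOn_Ioc_of_le hx.le).2 (hf.mono_set Ioc_subset_Ioi_self))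
      ⟨Ioi a, Ioi_mem_nhds hx, hf.aestronglyMeasurable⟩ hfx).const_sub _
  refine hprim.congr_of_eventuallyEq ?_
  filter_upwards [Ioi_mem_nhds hx] with u hu
  rw [← intervalIntegral.integral_Ioi_sub_Ioi hf hu.le, sub_sub_cancel]

theorem integral_Ioi_lt_integral_Ioi (hf : IntegrableOn f (Ioi a))
    (hpos : ∀ x ∈ Ioi a, 0 < f x) {x : ℝ} (hx : a < x) :
    ∫ t in Ioi x, f t < ∫ t in Ioi a, f t := by
  have := intervalIntegral.intervalIntegral_pos_of_pos_on
    ((intervalIntegrable_iff_integrableOn_Ioc_of_le hx.le).2 (hf.mono_set Ioc_subset_Ioi_self))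
    (fun t ht => hpos t ht.1) hx
  rw [← intervalIntegral.integral_Ioi_sub_Ioi hf hx.le] at this
  linarith

theorem eqOn_mul_exp_of_integral_Ioi_eq {b : ℝ} (hf : IntegrableOn f (Ioi b))
    (hcont : ContinuousOn f (Ioi b)) (hT : ∀ x ∈ Ioi b, ∫ t in Ioi x, f t = f x) :
    EqOn f (fun x => (∫ t in Ioi b, f t) * exp (b - x)) (Ioi b) := by
  intro x (hx : b < x)
  show f x = (∫ t in Ioi b, f t) * exp (b - x)
  set g : ℝ → ℝ := fun u => (∫ t in Ioi u, f t) * exp u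
  have hderiv : ∀ u ∈ Ioo b x, HasDerivAt g 0 u := by
    intro u hu
    have := (hf.hasDerivAt_integral_Ioi hu.1
      (hcont.continuousAt (Ioi_mem_nhds hu.1))).mul (hasDerivAt_exp u)
    rwa [hT u hu.1, neg_mul, neg_add_cancel] at this
  obtain ⟨c, -, hc⟩ := exists_hasDerivAt_eq_slope g (fun _ => 0) hx
    ((hf.continuousOn_Ici_primitive_Ioi.mono Icc_subset_Ici_self).mul
      continuous_exp.continuousOn) hderiv
  have hgx : g x = g b :=
    sub_eq_zero.1 ((div_eq_zero_iff.1 hc.symm).resolve_right (sub_ne_zero.2 hx.ne'))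
  calc f x = g x * exp (-x) := by
        rw [mul_assoc, ← exp_add, add_neg_cancel, exp_zero, mul_one, hT x hx]
    _ = (∫ t in Ioi b, f t) * exp (b - x) := by
        rw [hgx, mul_assoc, ← exp_add, ← sub_eq_add_neg]

/-- `f` agrees with its tail integral on the open set `u` where it is below the total mass, hence
on `closure u ∩ Ioi a`, where the tail is below the mass too; so `u` is relatively clopen. -/
theorem forall_lt_integral_Ioi_of_integral_Ioi_eq (hf : IntegrableOn f (Ioi a))
    (hcont : ContinuousOn f (Ioi a)) (hpos : ∀ x ∈ Ioi a, 0 < f x)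
    (hT : ∀ x ∈ Ioi a, f x < ∫ t in Ioi a, f t → ∫ t in Ioi x, f t = f x) :
    ∀ x ∈ Ioi a, f x < ∫ t in Ioi a, f t := by
  set u := Ioi a ∩ f ⁻¹' Iio (∫ t in Ioi a, f t)
  have hmass : 0 < ∫ t in Ioi a, f t :=
    (setIntegral_nonneg measurableSet_Ioi fun t ht =>
      (hpos t ((lt_add_one a).trans ht)).le).trans_lt
        (hf.integral_Ioi_lt_integral_Ioi hpos (lt_add_one a))
  have hne : (Ioi a ∩ u).Nonempty := by
    obtain ⟨x, hx, hlt⟩ := hf.exists_mem_Ioi_lt hmass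
    exact ⟨x, hx, hx, hlt⟩
  have hclosure : closure u ∩ Ioi a ⊆ u := by
    rintro x ⟨hxu, hx⟩
    have hagree : EqOn f (fun y => ∫ t in Ioi y, f t) (closure u ∩ Ioi a) :=
      EqOn.of_subset_closure (fun y hy => (hT y hy.1 hy.2).symm) (hcont.mono inter_subset_right)
        (hf.continuousOn_Ici_primitive_Ioi.mono fun y hy => Ioi_subset_Ici_self hy.2)
        (subset_inter subset_closure inter_subset_left) inter_subset_left
    exact ⟨hx, (hagree ⟨hxu, hx⟩).trans_lt (hf.integral_Ioi_lt_integral_Ioi hpos hx)⟩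
  exact fun x hx => (isPreconnected_Ioi.subset_of_closure_inter_subset
    (hcont.isOpen_inter_preimage isOpen_Ioi isOpen_Iio) hne hclosure hx).2

end MeasureTheory.IntegrableOn

theorem setOf_le_eq_Iic_union_Ici {f : ℝ → ℝ} {a x : ℝ}
    (hf0 : ∀ t, t ∉ Ioi a → f t = 0) (hanti : StrictAntiOn f (Ioi a)) (hx : a < x)
    (hfx : 0 ≤ f x) :
    {u | f u ≤ f x} = Iic a ∪ Ici x := by
  ext u
  simp only [mem_ofPred_eq, mem_union, mem_Iic, mem_Ici]
  by_cases hu : a < u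
  · rw [hanti.le_iff_ge hu hx]
    exact ⟨Or.inr, fun h => h.resolve_left hu.not_ge⟩
  · rw [hf0 u hu]
    exact ⟨fun _ => Or.inl (not_lt.1 hu), fun _ => hfx⟩

theorem withDensity_ofReal_Iic_union_Ici {f : ℝ → ℝ} {a x : ℝ}
    (hf0 : ∀ t, t ∉ Ioi a → f t = 0) (hf : IntegrableOn f (Ioi x))
    (hnn : ∀ t ∈ Ioi x, 0 ≤ f t) :
    volume.withDensity (fun t => ENNReal.ofReal (f t)) (Iic a ∪ Ici x) =
      ENNReal.ofReal (∫ t in Ioi x, f t) := by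
  have hIic : ∫⁻ t in Iic a, ENNReal.ofReal (f t) = 0 := by
    rw [setLIntegral_congr_fun measurableSet_Iic fun t (ht : t ≤ a) => by rw [hf0 t ht.not_gt,
      ENNReal.ofReal_zero], lintegral_zero]
  rw [withDensity_apply _ (measurableSet_Iic.union measurableSet_Ici),
    ofReal_integral_eq_lintegral_ofReal hf (ae_restrict_of_forall_mem measurableSet_Ioi hnn),
    setLIntegral_congr Ioi_ae_eq_Ici]
  refine le_antisymm ?_ (lintegral_mono_set subset_union_right)
  exact (lintegral_union_le _ _ _).trans_eq (by rw [hIic, zero_add])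

theorem integral_Ioi_exp_sub (a c : ℝ) : ∫ t in Ioi c, exp (a - t) = exp (a - c) := by
  simp only [sub_eq_add_neg, exp_add]
  rw [integral_const_mul, integral_exp_neg_Ioi]

/-- Characterization: if `X` has a continuous strictly decreasing pdf `f` on `(a,∞)` with
`f = 0` elsewhere, then `f(X)` is uniformly distributed on `(0,1)` (i.e. `P(f(X) ≤ y) = y`
for all `y ∈ (0,1)`) if and only if `f(x) = e^{a-x}` for all `x ∈ (a,∞)`. -/
theorem stmt_6 (a : ℝ) (f : ℝ → ℝ)
    (hf0 : ∀ x, x ∉ Set.Ioi a → f x = 0)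
    (hfpos : ∀ x ∈ Set.Ioi a, 0 < f x)
    (hcont : ContinuousOn f (Set.Ioi a))
    (hanti : StrictAntiOn f (Set.Ioi a))
    (hmeas : Measurable f)
    (μ : Measure ℝ)
    (hμ : μ = MeasureTheory.volume.withDensity (fun x => ENNReal.ofReal (f x)))
    (hprob : IsProbabilityMeasure μ) :
    (∀ y ∈ Set.Ioo (0:ℝ) 1, μ {x | f x ≤ y} = ENNReal.ofReal y)
      ↔ (∀ x ∈ Set.Ioi a, f x = Real.exp (a - x)) := by
  have hnn : ∀ x, 0 ≤ f x := fun x =>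
    if hx : x ∈ Ioi a then (hfpos x hx).le else (hf0 x hx).ge
  have hint : Integrable f := by
    refine ⟨hmeas.aestronglyMeasurable, (hasFiniteIntegral_iff_ofReal (ae_of_all _ hnn)).2 ?_⟩
    simpa [hμ] using measure_lt_top μ univ
  have hlevel : ∀ x ∈ Ioi a, μ {u | f u ≤ f x} = ENNReal.ofReal (∫ t in Ioi x, f t) := by
    intro x hx
    rw [hμ, setOf_le_eq_Iic_union_Ici hf0 hanti hx (hnn x),
      withDensity_ofReal_Iic_union_Ici hf0 hint.integrableOn fun t _ => hnn t]
  have hmass : ∫ t in Ioi a, f t = 1 := by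
    have := withDensity_ofReal_Iic_union_Ici (x := a) hf0 hint.integrableOn fun t _ => hnn t
    rwa [Iic_union_Ici, ← hμ, measure_univ, eq_comm, ENNReal.ofReal_eq_one] at this
  constructor
  · intro hunif
    have htail : ∀ x ∈ Ioi a, f x < ∫ t in Ioi a, f t → ∫ t in Ioi x, f t = f x := by
      intro x hx hlt
      rw [hmass] at hlt
      exact (ENNReal.ofReal_eq_ofReal_iff (setIntegral_nonneg measurableSet_Ioi fun t _ => hnn t)
        (hnn x)).1 ((hlevel x hx).symm.trans (hunif (f x) ⟨hfpos x hx, hlt⟩))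
    intro x hx
    simpa only [hmass, one_mul] using hint.integrableOn.eqOn_mul_exp_of_integral_Ioi_eq hcont
      (fun y hy => htail y hy
        (hint.integrableOn.forall_lt_integral_Ioi_of_integral_Ioi_eq hcont hfpos htail y hy)) hx
  · intro hexp y hy
    have hc : a < a - log y := by linarith [log_neg hy.1 hy.2]
    have hfc : f (a - log y) = y := by rw [hexp _ hc, sub_sub_cancel, exp_log hy.1]
    rw [← hfc, hlevel _ hc,
      setIntegral_congr_fun measurableSet_Ioi fun t ht => hexp t (hc.trans ht),
      integral_Ioi_exp_sub, hexp _ hc]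
end

section
/- If X has strictly decreasing pdf f with cdf F, then K(y)=1-p if and only if y = f(F^{-1}(p)), where K is the cdf of f(X), for 0<p<1. -/
open Set MeasureTheory

/-- Right-continuous inverse (quantile function) `F⁻¹(u) = sup {x : F x ≤ u}`. -/
noncomputable def uquantile (F : ℝ → ℝ) (u : ℝ) : ℝ := sSup {x : ℝ | F x ≤ u}

/-! Write `F` for the cdf of `μ`. The measure `μ` has the same null sets as Lebesgue measure
restricted to `(0,b)`, so `F` is continuous, vanishes on `(-∞,0]`, equals `1` on `[b,∞)` and is
strictly increasing on `[0,b]`; hence `F (F⁻¹ p) = p` with `F⁻¹ p ∈ (0,b)`. Writing `y = f x₀` with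
`x₀ ∈ (0,b)`, the monotonicity of `f` gives `{f ≤ y} = (0,x₀)ᶜ`, so `K y = 1 - F x₀`. Both sides
of the equivalence thus say `x₀ = F⁻¹ p`, by injectivity of `F` and of `f` on `(0,b)`. -/

open ProbabilityTheory

theorem apply_uquantile_eq {F : ℝ → ℝ} (hF : Continuous F) (hF_mono : Monotone F)
    {a c p : ℝ} (ha : F a ≤ p) (hc : p < F c) : F (uquantile F p) = p := by
  have hbdd : BddAbove {x | F x ≤ p} :=
    ⟨c, fun x hx => le_of_not_gt fun hcx => (hc.trans_le (hF_mono hcx.le)).not_ge hx⟩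
  have hmem : uquantile F p ∈ {x | F x ≤ p} :=
    (isClosed_le hF continuous_const).csSup_mem ⟨a, ha⟩ hbdd
  obtain ⟨z, hz⟩ := mem_range_of_exists_le_of_exists_ge hF ⟨a, ha⟩ ⟨c, hc.le⟩
  have hz_le : z ≤ uquantile F p := le_csSup hbdd (show F z ≤ p from hz.le)
  exact le_antisymm hmem (hz.symm.trans_le (hF_mono hz_le))

theorem MeasureTheory.withDensity_ofReal_apply_eq_zero_iff {α : Type*} [MeasurableSpace α]
    {ν : Measure α} {f : α → ℝ} {s t : Set α} (hf : Measurable f) (hs : MeasurableSet s)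
    (hf0 : ∀ x ∉ s, f x = 0) (hf_pos : ∀ x ∈ s, 0 < f x) :
    ν.withDensity (fun x => ENNReal.ofReal (f x)) t = 0 ↔ ν.restrict s t = 0 := by
  have hsupp : {x | ENNReal.ofReal (f x) ≠ 0} = s := by
    ext x
    by_cases hx : x ∈ s
    · simp [hx, hf_pos x hx]
    · simp [hx, hf0 x hx]
  rw [withDensity_apply_eq_zero hf.ennreal_ofReal, hsupp, Measure.restrict_apply_eq_zero' hs,
    inter_comm]

theorem MeasureTheory.Measure.AbsolutelyContinuous.nullSingletonClass {α : Type*}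
    [MeasurableSpace α] {μ ν : Measure α} [NullSingletonClass ν] (h : μ ≪ ν) :
    NullSingletonClass μ :=
  ⟨fun x => h (measure_singleton x)⟩

theorem setOf_apply_le_apply_eq_compl_Ioo {f : ℝ → ℝ} {a b x₀ : ℝ}
    (hf0 : ∀ x ∉ Ioo a b, f x = 0) (hf_pos : ∀ x ∈ Ioo a b, 0 < f x)
    (hf_anti : StrictAntiOn f (Ioo a b)) (hx₀ : x₀ ∈ Ioo a b) :
    {x | f x ≤ f x₀} = (Ioo a x₀)ᶜ := by
  ext x
  simp only [mem_ofPred_eq, mem_compl_iff, mem_Ioo, not_and, not_lt]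
  by_cases hx : x ∈ Ioo a b
  · rw [hf_anti.le_iff_ge hx hx₀]
    exact ⟨fun h _ => h, fun h => h hx.1⟩
  · rw [hf0 x hx]
    refine ⟨fun _ hax => ?_, fun _ => (hf_pos x₀ hx₀).le⟩
    exact hx₀.2.le.trans (le_of_not_gt fun hxb => hx ⟨hax, hxb⟩)

namespace ProbabilityTheory

variable {μ : Measure ℝ} [IsProbabilityMeasure μ]

theorem continuous_cdf [NullSingletonClass μ] : Continuous (cdf μ) := by
  refine continuous_iff_continuousAt.2 fun x => ?_
  have hjump : ENNReal.ofReal (cdf μ x - Function.leftLim (cdf μ) x) = 0 := by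
    rw [← StieltjesFunction.measure_singleton, measure_cdf, measure_singleton]
  have hleft : Function.leftLim (cdf μ) x = cdf μ x :=
    le_antisymm ((monotone_cdf μ).leftLim_le le_rfl) (by simpa [sub_nonpos] using hjump)
  rw [(monotone_cdf μ).continuousAt_iff_leftLim_eq_rightLim, StieltjesFunction.rightLim_eq,
    hleft]

variable {a b : ℝ}

theorem cdf_eq_zero_of_le (h : μ ≪ volume.restrict (Ioo a b)) {x : ℝ} (hx : x ≤ a) :
    cdf μ x = 0 := by
  have hnull : volume.restrict (Ioo a b) (Iic x) = 0 := by
    rw [Measure.restrict_apply' measurableSet_Ioo,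
      (Iic_disjoint_Ioi hx |>.mono_right Ioo_subset_Ioi_self).inter_eq, measure_empty]
  simp [cdf_eq_real, measureReal_def, h hnull]

theorem cdf_eq_one_of_ge (h : μ ≪ volume.restrict (Ioo a b)) {x : ℝ} (hx : b ≤ x) :
    cdf μ x = 1 := by
  have hnull : volume.restrict (Ioo a b) (Iic x)ᶜ = 0 := by
    rw [compl_Iic, Measure.restrict_apply' measurableSet_Ioo,
      (Ioi_disjoint_Iio_of_le hx |>.mono_right Ioo_subset_Iio_self).inter_eq, measure_empty]
  simp [cdf_eq_real, measureReal_def, (prob_compl_eq_zero_iff measurableSet_Iic).1 (h hnull)]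

theorem strictMonoOn_cdf (h : volume.restrict (Ioo a b) ≪ μ) :
    StrictMonoOn (cdf μ) (Icc a b) := by
  intro u hu v hv huv
  have hpos : volume.restrict (Ioo a b) (Ioc u v) ≠ 0 := by
    rw [Measure.restrict_apply measurableSet_Ioc]
    have hvol : volume (Ioo u v) ≠ 0 := by simpa [Real.volume_Ioo] using huv
    exact (measure_mono_null (subset_inter Ioo_subset_Ioc_self (Ioo_subset_Ioo hu.1 hv.2))).mt hvol
  have hIoc : μ (Ioc u v) ≠ 0 := mt (@h _) hpos
  rwa [← measure_cdf (μ := μ), StieltjesFunction.measure_Ioc, ne_eq, ENNReal.ofReal_eq_zero,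
    not_le, sub_pos] at hIoc

theorem cdf_uquantile (h : μ ≪ volume.restrict (Ioo a b)) {p : ℝ} (hp : p ∈ Ioo 0 1) :
    cdf μ (uquantile (cdf μ) p) = p :=
  have := h.nullSingletonClass
  apply_uquantile_eq continuous_cdf (monotone_cdf μ) (cdf_eq_zero_of_le h le_rfl ▸ hp.1.le)
    (cdf_eq_one_of_ge h le_rfl ▸ hp.2)

theorem uquantile_cdf_mem_Ioo (h : μ ≪ volume.restrict (Ioo a b)) {p : ℝ} (hp : p ∈ Ioo 0 1) :
    uquantile (cdf μ) p ∈ Ioo a b := by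
  have hq := cdf_uquantile h hp
  refine ⟨lt_of_not_ge fun hle => ?_, lt_of_not_ge fun hge => ?_⟩
  · exact hp.1.ne' (hq ▸ cdf_eq_zero_of_le h hle)
  · exact hp.2.ne (hq ▸ cdf_eq_one_of_ge h hge)

theorem measureReal_compl_Ioo (h : μ ≪ volume.restrict (Ioo a b)) (x : ℝ) :
    μ.real (Ioo a x)ᶜ = 1 - cdf μ x := by
  have := h.nullSingletonClass
  have hIoc : μ (Ioc a x) = ENNReal.ofReal (cdf μ x - cdf μ a) := by
    rw [← StieltjesFunction.measure_Ioc, measure_cdf]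
  rw [probReal_compl_eq_one_sub measurableSet_Ioo, measureReal_def, measure_congr Ioo_ae_eq_Ioc,
    hIoc, cdf_eq_zero_of_le h le_rfl, sub_zero, ENNReal.toReal_ofReal (cdf_nonneg μ x)]

end ProbabilityTheory

theorem stmt_12_general (b p y : ℝ) (f : ℝ → ℝ)
    (hf0 : ∀ x, x ∉ Set.Ioo 0 b → f x = 0)
    (hfpos : ∀ x ∈ Set.Ioo 0 b, 0 < f x)
    (hanti : StrictAntiOn f (Set.Ioo 0 b))
    (hmeas : Measurable f)
    (μ : Measure ℝ)
    (hμ : μ = MeasureTheory.volume.withDensity (fun x => ENNReal.ofReal (f x)))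
    (hprob : IsProbabilityMeasure μ)
    (hp : p ∈ Set.Ioo (0:ℝ) 1)
    (hIm : ∃ x ∈ Set.Ioo 0 b, f x = y) :
    (μ {x | f x ≤ y}).toReal = 1 - p
      ↔ y = f (uquantile (fun x => (μ (Set.Iic x)).toReal) p) := by
  obtain ⟨x₀, hx₀, rfl⟩ := hIm
  have hnull (t : Set ℝ) : μ t = 0 ↔ volume.restrict (Ioo 0 b) t = 0 :=
    hμ ▸ withDensity_ofReal_apply_eq_zero_iff hmeas measurableSet_Ioo hf0 hfpos
  have hμI : μ ≪ volume.restrict (Ioo 0 b) := fun t => (hnull t).2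
  have hIμ : volume.restrict (Ioo 0 b) ≪ μ := fun t => (hnull t).1
  have hcdf : (fun x => (μ (Iic x)).toReal) = cdf μ := funext fun x => (cdf_eq_real μ x).symm
  have hq := uquantile_cdf_mem_Ioo hμI hp
  rw [hcdf, setOf_apply_le_apply_eq_compl_Ioo hf0 hfpos hanti hx₀, ← measureReal_def,
    measureReal_compl_Ioo hμI, hanti.injOn.eq_iff hx₀ hq,
    ← (strictMonoOn_cdf hIμ).injOn.eq_iff (Ioo_subset_Icc_self hx₀) (Ioo_subset_Icc_self hq),
    cdf_uquantile hμI hp, sub_right_inj]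

/-- If `X` has support `(0,b)` and strictly decreasing pdf `f` with cdf `F`, then for
`p ∈ (0,1)` and `y` in the positive range of `f`:
`K(y) = 1 - p` if and only if `y = f(F⁻¹(p))`, where `K(y) = P(f(X) ≤ y)`. -/
theorem stmt_12 (b p y : ℝ) (f : ℝ → ℝ) (hb : 0 < b)
    (hf0 : ∀ x, x ∉ Set.Ioo 0 b → f x = 0)
    (hfpos : ∀ x ∈ Set.Ioo 0 b, 0 < f x)
    (hcont : ContinuousOn f (Set.Ioo 0 b))
    (hanti : StrictAntiOn f (Set.Ioo 0 b))
    (hmeas : Measurable f)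
    (μ : Measure ℝ)
    (hμ : μ = MeasureTheory.volume.withDensity (fun x => ENNReal.ofReal (f x)))
    (hprob : IsProbabilityMeasure μ)
    (hp : p ∈ Set.Ioo (0:ℝ) 1)
    (hIm : ∃ x ∈ Set.Ioo 0 b, f x = y) :
    (μ {x | f x ≤ y}).toReal = 1 - p
      ↔ y = f (uquantile (fun x => (μ (Set.Iic x)).toReal) p) :=
  stmt_12_general b p y f hf0 hfpos hanti hmeas μ hμ hprob hp hIm
end

section
/- Let X and Y be absolutely continuous with cdfs F and G. If φ(x):=G^{-1}(F(x)), then Y =_st φ(X) and φ satisfies φ(x_2)-φ(x_1) ≥ x_2 - x_1 whenever x_1 ≤ x_2 if and only if X ≤_disp Y. -/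
/-!
Strictly increasing continuous cdfs `F`, `G` are bijections of `ℝ` onto `(0, 1)` inverted by
`F⁻¹`, `G⁻¹`. Hence `φ x ≤ a ↔ x ≤ F⁻¹ (G a)`, so `P(φ X ≤ a) = F (F⁻¹ (G a)) = G a`; and the
substitution `α = F x₁`, `β = F x₂` turns the dispersive inequality into expansiveness of `φ`.
-/

open Set MeasureTheory ProbabilityTheory

/-- The dispersive order `X ≤_disp Y`, stated on the cdfs `F` of `X` and `G` of `Y`. -/
def DispersiveLE (F G : ℝ → ℝ) : Prop :=
  ∀ α β : ℝ, 0 < α → α ≤ β → β < 1 →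
    uquantile F β - uquantile F α ≤ uquantile G β - uquantile G α

section StrictMono

variable {F G : ℝ → ℝ}

lemma uquantile_apply (hF : StrictMono F) (x : ℝ) : uquantile F (F x) = x := by
  have h : {y : ℝ | F y ≤ F x} = Iic x := by
    ext y
    exact hF.le_iff_le
  rw [uquantile, h, csSup_Iic]

lemma apply_uquantile (hF : StrictMono F) {u : ℝ} (hu : u ∈ range F) :
    F (uquantile F u) = u := by
  obtain ⟨x, rfl⟩ := hu
  rw [uquantile_apply hF]

lemma uquantile_comp_le_iff (hF : StrictMono F) (hG : StrictMono G) (hFG : range F = range G)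
    (x a : ℝ) : uquantile G (F x) ≤ a ↔ x ≤ uquantile F (G a) := by
  have hGa : F (uquantile F (G a)) = G a := apply_uquantile hF (hFG ▸ mem_range_self a)
  rw [← hG.le_iff_le, apply_uquantile hG (hFG ▸ mem_range_self x)]
  calc F x ≤ G a ↔ F x ≤ F (uquantile F (G a)) := by rw [hGa]
    _ ↔ x ≤ uquantile F (G a) := hF.le_iff_le

lemma forall_le_uquantile_comp_iff_dispersiveLE (hF : StrictMono F)
    (hrange : range F = Ioo 0 1) :
    (∀ x₁ x₂ : ℝ, x₁ ≤ x₂ → x₂ - x₁ ≤ uquantile G (F x₂) - uquantile G (F x₁)) ↔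
      DispersiveLE F G := by
  have hmem : ∀ x, F x ∈ Ioo (0 : ℝ) 1 := fun x => hrange ▸ mem_range_self x
  constructor
  · intro h α β hα hαβ hβ
    obtain ⟨a, rfl⟩ : α ∈ range F := hrange ▸ ⟨hα, hαβ.trans_lt hβ⟩
    obtain ⟨b, rfl⟩ : β ∈ range F := hrange ▸ ⟨hα.trans_le hαβ, hβ⟩
    rw [uquantile_apply hF, uquantile_apply hF]
    exact h a b (hF.le_iff_le.mp hαβ)
  · intro h x₁ x₂ hx
    have := h (F x₁) (F x₂) (hmem x₁).1 (hF.monotone hx) (hmem x₂).2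
    rwa [uquantile_apply hF, uquantile_apply hF] at this

end StrictMono

lemma range_cdf_eq_Ioo {μ : Measure ℝ} (hc : Continuous (cdf μ)) (hm : StrictMono (cdf μ)) :
    range (cdf μ) = Ioo 0 1 := by
  ext u
  constructor
  · rintro ⟨x, rfl⟩
    exact ⟨(cdf_nonneg μ (x - 1)).trans_lt (hm (by linarith)),
      (hm (by linarith : x < x + 1)).trans_le (cdf_le_one μ (x + 1))⟩
  · rintro ⟨h0, h1⟩
    exact mem_range_of_exists_le_of_exists_ge hc
      (((tendsto_cdf_atBot μ).eventually_lt_const h0).exists.imp fun _ => le_of_lt)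
      (((tendsto_cdf_atTop μ).eventually_const_lt h1).exists.imp fun _ => le_of_lt)

lemma map_uquantile_comp_cdf {μ ν : Measure ℝ} [IsProbabilityMeasure μ] [IsProbabilityMeasure ν]
    (hμ : StrictMono (cdf μ)) (hν : StrictMono (cdf ν))
    (hrange : range (cdf μ) = range (cdf ν)) :
    μ.map (fun x => uquantile (cdf ν) (cdf μ x)) = ν := by
  have hpre : ∀ a, (fun x => uquantile (cdf ν) (cdf μ x)) ⁻¹' Iic a =
      Iic (uquantile (cdf μ) (cdf ν a)) := fun a => by
    ext x
    exact uquantile_comp_le_iff hμ hν hrange x a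
  have hmeas : Measurable fun x => uquantile (cdf ν) (cdf μ x) :=
    measurable_of_Iic fun a => hpre a ▸ measurableSet_Iic
  have := Measure.isProbabilityMeasure_map (μ := μ) hmeas.aemeasurable
  refine Measure.eq_of_cdf _ _ (StieltjesFunction.ext fun a => ?_)
  rw [cdf_eq_real, map_measureReal_apply hmeas measurableSet_Iic, hpre, ← cdf_eq_real,
    apply_uquantile hμ (hrange ▸ mem_range_self a)]

/-- Mapping of quantiles: for continuous random variables `X ∼ μ` and `Y ∼ ν` with cdfs
`F` and `G`, the mapping function `φ(x) = G⁻¹(F(x))` satisfies `Y =_st φ(X)`, and `φ`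
is expansive (`φ(x₂) - φ(x₁) ≥ x₂ - x₁` whenever `x₁ ≤ x₂`) if and only if
`X ≤_disp Y`, i.e. `F⁻¹(β) - F⁻¹(α) ≤ G⁻¹(β) - G⁻¹(α)` for all `0 < α ≤ β < 1`. -/
theorem stmt_13 (μ ν : Measure ℝ) [IsProbabilityMeasure μ] [IsProbabilityMeasure ν]
    (F G : ℝ → ℝ)
    (hF : F = fun x => (μ (Set.Iic x)).toReal)
    (hG : G = fun x => (ν (Set.Iic x)).toReal)
    (hFc : Continuous F) (hGc : Continuous G)
    (hFm : StrictMono F) (hGm : StrictMono G) :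
    ν = μ.map (fun x => uquantile G (F x)) ∧
    ((∀ x₁ x₂ : ℝ, x₁ ≤ x₂ →
        x₂ - x₁ ≤ uquantile G (F x₂) - uquantile G (F x₁))
      ↔ (∀ α β : ℝ, 0 < α → α ≤ β → β < 1 →
          uquantile F β - uquantile F α ≤ uquantile G β - uquantile G α)) := by
  obtain rfl : F = cdf μ := hF.trans (funext fun x => (cdf_eq_real μ x).symm)
  obtain rfl : G = cdf ν := hG.trans (funext fun x => (cdf_eq_real ν x).symm)
  have hrangeμ := range_cdf_eq_Ioo hFc hFm
  have hrangeν := range_cdf_eq_Ioo hGc hGm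
  exact ⟨(map_uquantile_comp_cdf hFm hGm (hrangeμ.trans hrangeν.symm)).symm,
    forall_le_uquantile_comp_iff_dispersiveLE hFm hrangeμ⟩
end
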